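/- Let x, t ∈ V(T₂) \ {z} with x ≠ t and suppose dist_{G−x}(s,t) < ∞. Then there exist a shortest s–t path R in G − x, a vertex u ∈ V(T₁), and an edge (u,v) of G with v ∈ V(T₂) \ {z}, such that R is the concatenation of the tree path of T from s to u, the edge (u,v), and a path from v to t all of whose vertices lie in V(T₂) \ {z}. -/

import Mathlib

open scoped ENNReal

/-- A directed graph on vertex type `V` with real edge weights. -/
structure WDigraph (V : Type) where
  Adj : V → V → Prop
  w : V → V → ℝ

namespace WDigraph

variable {V : Type}

/-- The weighted length of a walk, given as the list of its vertices:
the sum of the weights of consecutive pairs. -/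
def len (G : WDigraph V) (l : List V) : ℝ :=
  ((l.zip l.tail).map fun p => G.w p.1 p.2).sum

/-- `l` is a (simple) path from `u` to `v` in `G`: a nonempty list of pairwise distinct
vertices, consecutively joined by edges of `G`, starting at `u` and ending at `v`. -/
def IsPathFrom (G : WDigraph V) (u v : V) (l : List V) : Prop :=
  l.Chain' G.Adj ∧ l.Nodup ∧ l.head? = some u ∧ l.getLast? = some v

/-- The distance from `u` to `v` in `G`: the minimum length of a path from `u` to `v`,
equal to `∞` if no such path exists. -/
noncomputable def dist (G : WDigraph V) (u v : V) : ℝ≥0∞ :=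
  ⨅ (l : List V) (_ : G.IsPathFrom u v l), ENNReal.ofReal (G.len l)

/-- `G − x`: the graph obtained from `G` by deleting the vertex `x`
and all edges incident to it. -/
def deleteVert (G : WDigraph V) (x : V) : WDigraph V where
  Adj a b := G.Adj a b ∧ a ≠ x ∧ b ≠ x
  w := G.w

/-- `G[Ψ(U)]`: the subgraph of `G` consisting of the edges with at least one endpoint
in `U` (and their endpoints). -/
def psiSub (G : WDigraph V) (U : Set V) : WDigraph V where
  Adj a b := G.Adj a b ∧ (a ∈ U ∨ b ∈ U)
  w := G.w

/-- All edge weights of `G` are positive. -/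
def PosWeights (G : WDigraph V) : Prop := ∀ a b, G.Adj a b → 0 < G.w a b

end WDigraph

/-- Every prefix of the path `P` (starting at `s`) is a shortest path in `G`. -/
def ShortestPrefixes {V : Type} (G : WDigraph V) (s : V) (P : List V) : Prop :=
  ∀ k < P.length, ENNReal.ofReal (G.len (P.take (k + 1))) = G.dist s (P.getD k s)
/-- `T` is a shortest path tree of `G` rooted at `s`, encoded by its vertex set `VT`
and the function `tp` assigning to each vertex of `T` the tree path from `s` to it:
`T` spans exactly the vertices reachable from `s`, each tree path is a path of `G` of
length `dist_G(s, ·)`, and tree paths are prefix-consistent (for every `u` on the tree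
path to `v`, the tree path to `u` is a prefix of the tree path to `v`). -/
structure IsSPT {V : Type} (G : WDigraph V) (s : V) (VT : Set V)
    (tp : V → List V) : Prop where
  root_mem : s ∈ VT
  root_path : tp s = [s]
  path : ∀ v ∈ VT, G.IsPathFrom s v (tp v)
  shortest : ∀ v ∈ VT, ENNReal.ofReal (G.len (tp v)) = G.dist s v
  closed : ∀ v ∈ VT, ∀ u ∈ tp v, u ∈ VT ∧ tp u <+: tp v
  spans : ∀ v, G.dist s v ≠ ⊤ → v ∈ VT

/-!
Take a shortest `s`–`t` path `R₀` in `G − x` and cut it after its last vertex `u` in `T₁`.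
Every later vertex lies on a path from `s`, hence in `T`, but not in `T₁`, hence in
`V(T₂) \ {z}`. The tree path to `u` stays inside `T₁`, so it avoids both `x` and the rest of
`R₀`, and it is no longer than the part of `R₀` up to `u`; swapping the two yields a path of
`G − x` that is still shortest.
-/

namespace List

variable {α : Type*}

theorem exists_eq_append_getLast?_forall_not {p : α → Prop} :
    ∀ {l : List α}, (∃ a ∈ l, p a) →
      ∃ A B u, l = A ++ B ∧ A.getLast? = some u ∧ p u ∧ ∀ b ∈ B, ¬ p b
  | [], h => by simp at h
  | a :: l, h => by
    by_cases hl : ∃ b ∈ l, p b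
    · obtain ⟨A, B, u, rfl, hA, hu, hB⟩ := exists_eq_append_getLast?_forall_not hl
      obtain ⟨a', A', rfl⟩ := exists_cons_of_ne_nil (show A ≠ [] by rintro rfl; simp at hA)
      exact ⟨a :: a' :: A', B, u, rfl, by rwa [getLast?_cons_cons], hu, hB⟩
    · push Not at hl
      have ha : p a := by
        obtain ⟨b, hb, hpb⟩ := h
        rcases mem_cons.mp hb with rfl | hb
        exacts [hpb, absurd hpb (hl b hb)]
      exact ⟨[a], l, a, rfl, rfl, ha, hl⟩

end List

namespace WDigraph

variable {V : Type} {G : WDigraph V}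

theorem len_cons_cons (G : WDigraph V) (a b : V) (l : List V) :
    G.len (a :: b :: l) = G.w a b + G.len (b :: l) := by
  simp [len]

theorem len_append_of_getLast? (G : WDigraph V) {u : V} :
    ∀ {A : List V}, A.getLast? = some u → ∀ B, G.len (A ++ B) = G.len A + G.len (u :: B)
  | [], h, _ => by simp at h
  | [a], h, B => by
    obtain rfl : a = u := by simpa using h
    simp [len]
  | a :: a' :: A, h, B => by
    rw [List.getLast?_cons_cons] at h
    rw [List.cons_append, List.cons_append, len_cons_cons, ← List.cons_append,
      len_append_of_getLast? G h, len_cons_cons]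
    ring

theorem len_append_le_len_append {A P : List V} {u : V} (hA : A.getLast? = some u)
    (hP : P.getLast? = some u) (hle : G.len P ≤ G.len A) (B : List V) :
    G.len (P ++ B) ≤ G.len (A ++ B) := by
  rw [len_append_of_getLast? G hA, len_append_of_getLast? G hP]
  linarith

theorem len_nonneg (hw : G.PosWeights) : ∀ {l : List V}, l.IsChain G.Adj → 0 ≤ G.len l
  | [], _ | [_], _ => by simp [len]
  | a :: b :: l, h => by
    rw [List.isChain_cons_cons] at h
    rw [len_cons_cons]
    exact add_nonneg (hw a b h.1).le (len_nonneg hw h.2)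

namespace IsPathFrom

variable {u v : V} {l : List V}

theorem dist_le (h : G.IsPathFrom u v l) : G.dist u v ≤ ENNReal.ofReal (G.len l) :=
  iInf₂_le l h

theorem dist_ne_top (h : G.IsPathFrom u v l) : G.dist u v ≠ ⊤ :=
  ne_top_of_le_ne_top ENNReal.ofReal_ne_top h.dist_le

theorem of_append_left {A B : List V} {w : V} (h : G.IsPathFrom u v (A ++ B))
    (hA : A.getLast? = some w) : G.IsPathFrom u w A := by
  obtain ⟨hc, hn, hh, -⟩ := h
  obtain ⟨a, A, rfl⟩ := List.exists_cons_of_ne_nil (show A ≠ [] by rintro rfl; simp at hA)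
  exact ⟨hc.infix (List.infix_append [] _ B), hn.sublist (List.sublist_append_left _ B),
    by simpa using hh, hA⟩

theorem dist_ne_top_of_mem (h : G.IsPathFrom u v l) {b : V} (hb : b ∈ l) :
    G.dist u b ≠ ⊤ := by
  obtain ⟨C, D, rfl⟩ := List.append_of_mem hb
  rw [← List.singleton_append, ← List.append_assoc] at h
  exact (h.of_append_left (List.getLast?_concat ..)).dist_ne_top

theorem adj_of_append {A B : List V} {a b : V} (h : G.IsPathFrom u v (A ++ B))
    (hA : A.getLast? = some a) (hB : B.head? = some b) : G.Adj a b :=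
  (List.isChain_append.mp h.1).2.2 a hA b hB

theorem replace_prefix {A B P : List V} {w : V} (h : G.IsPathFrom u v (A ++ B))
    (hA : A.getLast? = some w) (hB : B ≠ []) (hP : G.IsPathFrom u w P)
    (hdisj : P.Disjoint B) : G.IsPathFrom u v (P ++ B) := by
  obtain ⟨hc, hn, -, hl⟩ := h
  obtain ⟨hcP, hnP, hhP, hlP⟩ := hP
  obtain ⟨-, hcB, hjoin⟩ := List.isChain_append.mp hc
  refine ⟨List.isChain_append.mpr ⟨hcP, hcB, ?_⟩,
    hnP.append (List.nodup_append.mp hn).2.1 hdisj, ?_, ?_⟩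
  · intro a ha
    rw [hlP, Option.mem_some_iff] at ha
    exact ha ▸ hjoin w hA
  · rw [List.head?_append, hhP, Option.some_or]
  · rwa [List.getLast?_append_of_ne_nil _ hB] at hl ⊢

theorem of_deleteVert {x : V} (h : (G.deleteVert x).IsPathFrom u v l) :
    G.IsPathFrom u v l :=
  ⟨h.1.imp fun _ _ hab => hab.1, h.2⟩

theorem deleteVert (h : G.IsPathFrom u v l) {x : V} (hx : x ∉ l) :
    (G.deleteVert x).IsPathFrom u v l :=
  ⟨h.1.imp_of_mem_imp fun _ _ ha hb hab => ⟨hab, ne_of_mem_of_not_mem ha hx,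
    ne_of_mem_of_not_mem hb hx⟩, h.2⟩

end IsPathFrom

theorem exists_isPathFrom_ofReal_len_eq_dist [Finite V] {u v : V} (h : G.dist u v ≠ ⊤) :
    ∃ l, G.IsPathFrom u v l ∧ ENNReal.ofReal (G.len l) = G.dist u v := by
  have := Fintype.ofFinite V
  have hfin : {l | G.IsPathFrom u v l}.Finite :=
    (List.finite_length_le V (Fintype.card V)).subset fun l hl => hl.2.1.length_le_card
  have hne : {l | G.IsPathFrom u v l}.Nonempty := by
    by_contra hemp
    exact h (iInf₂_eq_top.mpr fun l hl => absurd ⟨l, hl⟩ hemp)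
  obtain ⟨l, hl, hmin⟩ := Set.exists_min_image _ (fun l => ENNReal.ofReal (G.len l)) hfin hne
  exact ⟨l, hl, le_antisymm (le_iInf₂ hmin) hl.dist_le⟩

end WDigraph

namespace IsSPT

variable {V : Type} {G : WDigraph V} {s : V} {VT : Set V} {tp : V → List V}

theorem len_tp_le (hT : IsSPT G s VT tp) (hw : G.PosWeights) {u : V} {A : List V}
    (hA : G.IsPathFrom s u A) : G.len (tp u) ≤ G.len A :=
  (ENNReal.ofReal_le_ofReal_iff (WDigraph.len_nonneg hw hA.1)).mp
    ((hT.shortest u (hT.spans u hA.dist_ne_top)).trans_le hA.dist_le)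

end IsSPT

theorem replacement_path_decomposition_general {V : Type} [Fintype V] (G : WDigraph V)
    (hw : G.PosWeights)
    (s : V) (VT : Set V) (tp : V → List V) (hT : IsSPT G s VT tp)
    (z : V) (S1 S2 : Set V)
    (hunion : S1 ∪ S2 = VT) (hinter : S1 ∩ S2 = {z}) (hsS1 : s ∈ S1)
    (hanc : ∀ v ∈ S1, ∀ u ∈ tp v, u ∈ S1)
    (x t : V) (hx : x ∈ S2 \ {z}) (ht : t ∈ S2 \ {z})
    (hfin : (G.deleteVert x).dist s t ≠ ⊤) :
    ∃ (R l : List V) (u v : V),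
      (G.deleteVert x).IsPathFrom s t R ∧
      ENNReal.ofReal (G.len R) = (G.deleteVert x).dist s t ∧
      u ∈ S1 ∧ G.Adj u v ∧ v ∈ S2 \ {z} ∧
      R = tp u ++ l ∧ l.head? = some v ∧ (∀ a ∈ l, a ∈ S2 \ {z}) := by
  have hcompl : VT \ S1 = S2 \ {z} := by
    rw [← hunion, ← hinter, Set.union_sdiff_left, Set.sdiff_inter_self_eq_sdiff]
  have hnot : ∀ b ∈ S2 \ {z}, b ∉ S1 := fun b hb => (hcompl.symm.subset hb).2
  obtain ⟨R₀, hR₀, hR₀_len⟩ := WDigraph.exists_isPathFrom_ofReal_len_eq_dist hfin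
  obtain ⟨A, B, u, rfl, hA, huS1, hB⟩ := List.exists_eq_append_getLast?_forall_not
    (p := (· ∈ S1)) ⟨s, List.mem_of_mem_head? hR₀.2.2.1, hsS1⟩
  have hBS2 : ∀ b ∈ B, b ∈ S2 \ {z} := fun b hb => hcompl.subset
    ⟨hT.spans b (hR₀.of_deleteVert.dist_ne_top_of_mem (List.mem_append_right A hb)), hB b hb⟩
  obtain ⟨v, B, rfl⟩ := List.exists_cons_of_ne_nil (show B ≠ [] by
    rintro rfl
    have hlast := hR₀.2.2.2
    rw [List.append_nil, hA, Option.some_inj] at hlast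
    exact hnot t ht (hlast ▸ huS1))
  have hu : u ∈ VT := hunion ▸ Or.inl huS1
  have htp : (G.deleteVert x).IsPathFrom s u (tp u) :=
    (hT.path u hu).deleteVert fun hxu => hnot x hx (hanc u huS1 x hxu)
  have hR := hR₀.replace_prefix hA (List.cons_ne_nil v B) htp
    fun a ha hb => hnot a (hBS2 a hb) (hanc u huS1 a ha)
  have hlen : G.len (tp u ++ v :: B) ≤ G.len (A ++ v :: B) :=
    WDigraph.len_append_le_len_append hA (hT.path u hu).2.2.2
      (hT.len_tp_le hw (hR₀.of_deleteVert.of_append_left hA)) _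
  exact ⟨_, v :: B, u, v, hR, le_antisymm (hR₀_len ▸ ENNReal.ofReal_le_ofReal hlen) hR.dist_le,
    huS1, (hR₀.adj_of_append hA rfl).1, hBS2 v List.mem_cons_self, rfl, rfl, hBS2⟩

/-- **Canonical form of replacement paths into `T₂`.** `T` is a shortest path tree of
`G` rooted at `s` (given by `VT`, `tp`), split into the subtrees `T₁` (containing `s`,
vertex set `S1`, ancestor-closed) and `T₂` (rooted at `z`, vertex set `S2`), with
`S1 ∪ S2 = V(T)` and `S1 ∩ S2 = {z}`.  Let `x, t ∈ S2 \ {z}` with `x ≠ t` and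
`dist_{G−x}(s,t) < ∞`.  Then there exist a shortest `s`–`t` path `R` in `G − x`, a
vertex `u ∈ S1 = V(T₁)`, and an edge `(u,v)` of `G` with `v ∈ S2 \ {z}`, such that `R`
is the concatenation of the tree path of `T` from `s` to `u`, the edge `(u,v)`, and a
path from `v` to `t` all of whose vertices lie in `S2 \ {z}`. -/
theorem replacement_path_decomposition {V : Type} [Fintype V] (G : WDigraph V)
    (hw : G.PosWeights)
    (s : V) (VT : Set V) (tp : V → List V) (hT : IsSPT G s VT tp)
    (z : V) (S1 S2 : Set V)
    (hunion : S1 ∪ S2 = VT) (hinter : S1 ∩ S2 = {z}) (hsS1 : s ∈ S1)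
    (hanc : ∀ v ∈ S1, ∀ u ∈ tp v, u ∈ S1)
    (hdesc : ∀ v ∈ S2, tp z <+: tp v)
    (x t : V) (hx : x ∈ S2 \ {z}) (ht : t ∈ S2 \ {z}) (hxt : x ≠ t)
    (hfin : (G.deleteVert x).dist s t ≠ ⊤) :
    ∃ (R l : List V) (u v : V),
      (G.deleteVert x).IsPathFrom s t R ∧
      ENNReal.ofReal (G.len R) = (G.deleteVert x).dist s t ∧
      u ∈ S1 ∧ G.Adj u v ∧ v ∈ S2 \ {z} ∧
      R = tp u ++ l ∧ l.head? = some v ∧ (∀ a ∈ l, a ∈ S2 \ {z}) :=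
  replacement_path_decomposition_general G hw s VT tp hT z S1 S2 hunion hinter hsS1 hanc x t hx ht
    hfin
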